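/- arXiv:2301.01412 — 2 statements merged into one kernel-verified Lean document; each statement's English description precedes it below -/
import Mathlib

section
/- Let R be a symmetric positive semidefinite p×p real matrix, δ > 0, and k a positive integer. Define the kp×kp block matrix Σ whose (r,s) block is R + δ²I_p if r = s and R otherwise. Then Σ is invertible and Σ^{-1} = (1/(δ²k)) (k I_{kp} − V (I_p − R_δ^{-1}) Vᵀ), where R_δ = I_p + (k/δ²)R and V = [I_p; I_p; ...; I_p] is the kp×p stacked identity. -/
open Matrix

/-!
Σ = V R Vᵀ + δ² I with Vᵀ V = k I. Hence Σ V = δ² V R_δ, so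
Σ V (I - R_δ⁻¹) Vᵀ = δ² V (R_δ - I) Vᵀ = k V R Vᵀ, and therefore
Σ (k I - V (I - R_δ⁻¹) Vᵀ) = k δ² I. The matrix R_δ = I + (k/δ²) R is invertible, being
positive definite.
-/

namespace Matrix

section Stacking

variable {ι l m n α : Type*} [Fintype n]

-- Without `(α := ι)` the product elaborates with the `CStarMatrix` multiplication instance.
theorem submatrix_id_snd_mul_submatrix_snd_id [Fintype ι] [NonUnitalNonAssocSemiring α]
    (A : Matrix l n α) (B : Matrix n m α) :
    A.submatrix id (Prod.snd (α := ι)) * B.submatrix (Prod.snd (α := ι)) id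
      = Fintype.card ι • (A * B) := by
  ext a b
  simp only [Matrix.smul_apply, mul_apply, Fintype.sum_prod_type, submatrix_apply, id]
  simp

theorem one_submatrix_snd_mul_mul_transpose [DecidableEq n] [NonAssocSemiring α]
    (R : Matrix n n α) :
    (1 : Matrix n n α).submatrix (Prod.snd (α := ι)) id * R
        * ((1 : Matrix n n α).submatrix (Prod.snd (α := ι)) id)ᵀ
      = R.submatrix Prod.snd Prod.snd := by
  ext x y
  simp [mul_apply, one_apply]

end Stacking

variable {m n K : Type*} [Fintype m] [Fintype n] [DecidableEq m] [DecidableEq n] [Field K]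

theorem mul_woodbury_of_transpose_mul_self {V : Matrix m n K} {c d : K}
    (hV : Vᵀ * V = c • 1) (hd : d ≠ 0) (R : Matrix n n K)
    (hM : IsUnit (1 + (c / d) • R).det) :
    (V * R * Vᵀ + d • 1) * (c • 1 - V * (1 - (1 + (c / d) • R)⁻¹) * Vᵀ)
      = (d * c) • 1 := by
  set M := 1 + (c / d) • R
  have hSV : (V * R * Vᵀ + d • 1) * V = d • (V * M) := by
    rw [Matrix.add_mul, Matrix.mul_assoc, hV]
    simp only [M, Matrix.mul_add, Matrix.mul_smul, smul_add, smul_smul, mul_div_cancel₀ _ hd]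
    simp only [Matrix.mul_one, Matrix.smul_mul, Matrix.one_mul]
    module
  have hMM : M * (1 - M⁻¹) = M - 1 := by
    rw [Matrix.mul_sub, Matrix.mul_one, Matrix.mul_nonsing_inv _ hM]
  calc _ = c • (V * R * Vᵀ + d • 1) - d • (V * (M - 1) * Vᵀ) := by
        rw [Matrix.mul_sub, Matrix.mul_smul, Matrix.mul_one, ← Matrix.mul_assoc,
          ← Matrix.mul_assoc, hSV, Matrix.smul_mul, Matrix.smul_mul, Matrix.mul_assoc V M, hMM]
    _ = (d * c) • 1 := by
        simp only [M, add_sub_cancel_left, Matrix.mul_smul, Matrix.smul_mul, smul_smul,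
          mul_div_cancel₀ _ hd]
        module

end Matrix

/-- For R symmetric PSD, δ > 0, k ≥ 1, the kp×kp block matrix Σ
(diagonal blocks R + δ²I, off-diagonal blocks R) is invertible with
Σ⁻¹ = (1/(δ²k)) (k I − V (I − R_δ⁻¹) Vᵀ), where R_δ = I + (k/δ²) R and V is the
vertical stack of k copies of I_p. -/
theorem stmt_3 (p k : ℕ) (hk : 0 < k) (δ : ℝ) (hδ : 0 < δ)
    (R : Matrix (Fin p) (Fin p) ℝ) (hR : R.PosSemidef)
    (Sg : Matrix (Fin k × Fin p) (Fin k × Fin p) ℝ)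
    (hSg : ∀ x y, Sg x y = R x.2 y.2 + if x = y then δ ^ 2 else 0)
    (V : Matrix (Fin k × Fin p) (Fin p) ℝ)
    (hV : ∀ x b, V x b = if x.2 = b then (1 : ℝ) else 0)
    (Rδ : Matrix (Fin p) (Fin p) ℝ)
    (hRδ : Rδ = 1 + ((k : ℝ) / δ ^ 2) • R) :
    IsUnit Sg.det ∧
      Sg⁻¹ = ((δ ^ 2 * (k : ℝ))⁻¹) •
        ((k : ℝ) • (1 : Matrix (Fin k × Fin p) (Fin k × Fin p) ℝ)
          - V * (1 - Rδ⁻¹) * Vᵀ) := by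
  subst hRδ
  have hV_stack : V = (1 : Matrix (Fin p) (Fin p) ℝ).submatrix Prod.snd id := by
    ext x b
    simp [hV, one_apply]
  have hVtV : Vᵀ * V = (k : ℝ) • 1 := by
    rw [hV_stack, transpose_submatrix, transpose_one, submatrix_id_snd_mul_submatrix_snd_id,
      Matrix.mul_one, Fintype.card_fin, Nat.cast_smul_eq_nsmul]
  have hSg_split : Sg = V * R * Vᵀ + δ ^ 2 • 1 := by
    ext x y
    rw [hSg, hV_stack, one_submatrix_snd_mul_mul_transpose]
    simp [one_apply]
  have hRδ_unit : IsUnit (1 + ((k : ℝ) / δ ^ 2) • R).det := by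
    rw [← isUnit_iff_isUnit_det]
    exact (PosDef.one.add_posSemidef (hR.smul (by positivity))).isUnit
  have hinv : Sg * ((δ ^ 2 * (k : ℝ))⁻¹ •
      ((k : ℝ) • 1 - V * (1 - (1 + ((k : ℝ) / δ ^ 2) • R)⁻¹) * Vᵀ)) = 1 := by
    rw [Matrix.mul_smul, hSg_split,
      mul_woodbury_of_transpose_mul_self hVtV (by positivity) R hRδ_unit, smul_smul,
      inv_mul_cancel₀ (by positivity), one_smul]
  exact ⟨isUnit_det_of_right_inverse hinv, inv_eq_right_inv hinv⟩
end

section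
/- The periodic kernel k(s,t) = exp(-θ² sin²(π(s−t)/T)) is a valid positive semidefinite kernel on ℝ: for any finite set of points t_1,...,t_n and any real vector a, Σ_{i,j} a_i a_j k(t_i, t_j) ≥ 0. -/
/-!
Since `sin² x = (1 - cos 2x) / 2`, the kernel is `e^{-θ²/2} exp ((θ²/2) cos (2π(s - t)/T))`, and
`cos (x - y)` is the real inner product of `e^{ix}` and `e^{iy}` in `ℂ`. So the kernel matrix is a
positive multiple of the entrywise exponential of a positive semidefinite Gram matrix. By the Schur
product theorem all entrywise powers of a positive semidefinite matrix are positive semidefinite,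
and the exponential series has nonnegative coefficients.
-/

open Matrix Real

namespace Matrix

theorem PosSemidef.map_pow {ι : Type*} [Finite ι] {M : Matrix ι ι ℝ} (hM : M.PosSemidef)
    (m : ℕ) : (M.map (· ^ m)).PosSemidef := by
  induction m with
  | zero =>
    convert posSemidef_vecMulVec_self_star (fun _ : ι => (1 : ℝ)) using 1
    ext i j
    simp [vecMulVec]
  | succ m ih =>
    have hsucc : M.map (· ^ (m + 1)) = M.map (· ^ m) ⊙ M := by
      ext i j
      simp [pow_succ]
    exact hsucc ▸ ih.hadamard hM

theorem PosSemidef.map_exp {ι : Type*} [Fintype ι] {M : Matrix ι ι ℝ} (hM : M.PosSemidef) :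
    (M.map rexp).PosSemidef := by
  refine .of_dotProduct_mulVec_nonneg (hM.isHermitian.map _ fun _ => rfl) fun x => ?_
  have hsum : HasSum (fun m : ℕ => (m.factorial : ℝ)⁻¹ * (star x ⬝ᵥ (M.map (· ^ m) *ᵥ x)))
      (star x ⬝ᵥ (M.map rexp *ᵥ x)) := by
    simp only [dotProduct, mulVec, map_apply, Finset.mul_sum]
    refine hasSum_sum fun i _ => hasSum_sum fun j _ => ?_
    have hij := ((NormedSpace.exp_series_hasSum_exp' (𝕂 := ℝ) (M i j)).mul_left
      (star x i)).mul_right (x j)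
    rw [← Real.exp_eq_exp_ℝ] at hij
    simpa only [smul_eq_mul, mul_left_comm, mul_assoc] using hij
  exact hsum.nonneg fun m =>
    mul_nonneg (by positivity) ((hM.map_pow m).dotProduct_mulVec_nonneg x)

theorem PosSemidef.sum_mul_mul_nonneg {ι : Type*} [Fintype ι] {M : Matrix ι ι ℝ}
    (hM : M.PosSemidef) (a : ι → ℝ) : 0 ≤ ∑ i, ∑ j, a i * a j * M i j := by
  simpa [dotProduct, mulVec, Finset.mul_sum, mul_assoc, mul_left_comm, mul_comm]
    using hM.dotProduct_mulVec_nonneg a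

end Matrix

theorem Complex.inner_exp_ofReal_mul_I (x y : ℝ) :
    inner ℝ (Complex.exp (x * Complex.I)) (Complex.exp (y * Complex.I)) = Real.cos (x - y) := by
  rw [Complex.inner, ← Complex.exp_conj, ← Complex.exp_add, ← Real.cos_neg, neg_sub,
    ← Complex.exp_ofReal_mul_I_re]
  congr 2
  simp
  ring

theorem Real.exp_neg_mul_sin_sq (c x : ℝ) :
    rexp (-c * sin x ^ 2) = rexp (-(c / 2)) * rexp (c / 2 * cos (2 * x)) := by
  rw [← exp_add, sin_sq_eq_half_sub]
  ring_nf

theorem stmt_16_general (θ T : ℝ) (n : ℕ) (t : Fin n → ℝ) (a : Fin n → ℝ) :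
    0 ≤ ∑ i : Fin n, ∑ j : Fin n,
      a i * a j * Real.exp (-θ ^ 2 * Real.sin (Real.pi * (t i - t j) / T) ^ 2) := by
  set c := θ ^ 2 / 2
  let u : Fin n → ℂ := fun i => Complex.exp ((2 * π * t i / T : ℝ) * Complex.I)
  have hK : (rexp (-c) • (c • gram ℝ u).map rexp).PosSemidef :=
    (((posSemidef_gram ℝ u).smul (by positivity)).map_exp).smul (exp_pos _).le
  convert hK.sum_mul_mul_nonneg a using 4 with i - j -
  rw [Matrix.smul_apply, map_apply, Matrix.smul_apply, gram_apply, Complex.inner_exp_ofReal_mul_I,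
    exp_neg_mul_sin_sq, smul_eq_mul, smul_eq_mul]
  congr 4
  ring

/-- The periodic kernel k(s,t) = exp(-θ² sin²(π(s−t)/T)) is a
positive semidefinite kernel on ℝ: for any points t₁,...,t_n and reals a_i,
Σ_{i,j} a_i a_j k(t_i, t_j) ≥ 0. -/
theorem stmt_16 (θ T : ℝ) (hT : 0 < T) (n : ℕ) (t : Fin n → ℝ) (a : Fin n → ℝ) :
    0 ≤ ∑ i : Fin n, ∑ j : Fin n,
      a i * a j * Real.exp (-θ ^ 2 * Real.sin (Real.pi * (t i - t j) / T) ^ 2) :=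
  stmt_16_general θ T n t a
end
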